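/- Let n ≥ 1, ℏ > 0 and a, b ∈ ℝ^n. For every Schwartz function ψ ∈ 𝒮(ℝ^n), the difference quotient (U_ℏ(ta,tb)ψ − ψ)/t converges in L²(ℝ^n) norm, as t → 0, to i·Φ_ℏ(a,b)ψ, i.e. to the function x ↦ ℏ (a·∇ψ)(x) + i (b·x) ψ(x). (Thus the field operator Φ_ℏ(a,b) = −i lim_{t→0} (U_ℏ(ta,tb) − I)/t on the Schwartz domain.) -/

import Mathlib

open MeasureTheory Complex Filter
open scoped ENNReal NNReal

noncomputable section

/-- `n`-dimensional Euclidean space `ℝⁿ`. -/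
abbrev V (n : ℕ) : Type := EuclideanSpace ℝ (Fin n)

/-- Euclidean dot product on `ℝⁿ`. -/
def dotp {n : ℕ} (a b : V n) : ℝ := ∑ i, a i * b i

/-- The `L²` inner product `⟨f, g⟩ = ∫ conj (f x) * g x`, conjugate-linear in the first slot. -/
def ip {n : ℕ} (f g : V n → ℂ) : ℂ := ∫ x : V n, (starRingEnd ℂ) (f x) * g x

/-- The coherent state `ψ_ℏ^{(p,q)}` on `ℝⁿ`. -/
def coh {n : ℕ} (ℏ : ℝ) (p q : V n) : V n → ℂ := fun x =>
  ((Real.pi * ℏ) ^ (-(n : ℝ) / 4) : ℝ) *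
    Complex.exp (-(Complex.I * dotp p q) / (2 * ℏ) + Complex.I * dotp p x / ℏ
      - dotp (x - q) (x - q) / (2 * ℏ))

/-- The Schrödinger-representation Weyl operator `U_ℏ(a,b)`:
`(U_ℏ(a,b)ψ)(x) = exp(iℏ a·b/2) exp(i b·x) ψ(x + ℏa)`. -/
def weylOp {n : ℕ} (ℏ : ℝ) (a b : V n) (ψ : V n → ℂ) : V n → ℂ := fun x =>
  Complex.exp (Complex.I * ℏ * dotp a b / 2) * Complex.exp (Complex.I * dotp b x) *
    ψ (x + ℏ • a)

/-- The field operator `Φ_ℏ(a,b)`: `(Φ_ℏ(a,b)ψ)(x) = -iℏ (a·∇ψ)(x) + (b·x) ψ(x)`. -/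
def fieldOp {n : ℕ} (ℏ : ℝ) (a b : V n) (ψ : V n → ℂ) : V n → ℂ := fun x =>
  -Complex.I * ℏ * fderiv ℝ ψ x a + dotp b x * ψ x

/- ### Auxiliary lemmas -/

lemma dotp_eq_inner {n : ℕ} (a b : V n) : dotp a b = (inner ℝ a b : ℝ) := by
  simp [dotp, PiLp.inner_apply, RCLike.inner_apply, conj_trivial, mul_comm]

lemma abs_dotp_le {n : ℕ} (a b : V n) : |dotp a b| ≤ ‖a‖ * ‖b‖ := by
  rw [dotp_eq_inner]; exact abs_real_inner_le_norm a b

lemma dotp_smul_left {n : ℕ} (t : ℝ) (a b : V n) : dotp (t • a) b = t * dotp a b := by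
  simp [dotp, Finset.mul_sum, mul_assoc]

lemma dotp_smul_right {n : ℕ} (t : ℝ) (a b : V n) : dotp a (t • b) = t * dotp a b := by
  simp [dotp, Finset.mul_sum]
  exact Finset.sum_congr rfl fun i _ => by ring

lemma dotp_cont {n : ℕ} (b : V n) : Continuous fun x : V n => dotp b x := by
  simp only [dotp_eq_inner]
  exact Continuous.inner continuous_const continuous_id

lemma schwartz_decay_bound {n : ℕ} (f : SchwartzMap (V n) ℂ) (k : ℕ) :
    ∃ C : ℝ, 0 ≤ C ∧ ∀ x, ‖f x‖ * (1 + ‖x‖) ^ k ≤ C := by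
  refine ⟨2 ^ k * (Finset.Iic (k, 0)).sup (fun m => SchwartzMap.seminorm ℝ m.1 m.2) f,
    by positivity, fun x => ?_⟩
  have h := SchwartzMap.one_add_le_sup_seminorm_apply (𝕜 := ℝ) (m := (k, 0)) le_rfl le_rfl f x
  simpa [norm_iteratedFDeriv_zero, mul_comm] using h

set_option maxHeartbeats 2000000 in
/-- for Schwartz `ψ`, the difference quotient `(U_ℏ(ta,tb)ψ - ψ)/t` converges
in `L²` norm, as `t → 0`, to `i·Φ_ℏ(a,b)ψ`, i.e. to `x ↦ ℏ (a·∇ψ)(x) + i (b·x) ψ(x)`.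
(Thus `Φ_ℏ(a,b) = -i lim_{t→0} (U_ℏ(ta,tb) - I)/t` on the Schwartz domain.) -/
theorem weylOp_generator (n : ℕ) (hn : 1 ≤ n) (ℏ : ℝ) (hℏ : 0 < ℏ)
    (a b : V n) (ψ : SchwartzMap (V n) ℂ) :
    Tendsto (fun t : ℝ => eLpNorm
        (fun x => (weylOp ℏ (t • a) (t • b) (⇑ψ) x - ψ x) / (t : ℂ)
          - Complex.I * fieldOp ℏ a b (⇑ψ) x)
        2 (volume : Measure (V n)))
      (nhdsWithin 0 {0}ᶜ) (nhds 0) := by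
  classical
  set v : V n := ℏ • a with hv
  set d : ℝ := dotp a b with hd
  set φ : SchwartzMap (V n) ℂ := LineDeriv.lineDerivOpCLM ℝ (SchwartzMap (V n) ℂ) v ψ with hφ
  set F : ℝ → V n → ℂ := fun t x =>
    (weylOp ℏ (t • a) (t • b) (⇑ψ) x - ψ x) / (t : ℂ)
      - Complex.I * fieldOp ℏ a b (⇑ψ) x with hFdef
  set g : V n → ℝ → ℂ := fun x t =>
    Complex.exp (Complex.I * ((ℏ * d / 2 * t ^ 2 + dotp b x * t : ℝ) : ℂ)) * ψ (x + t • v)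
    with hgdef
  set g' : V n → ℝ → ℂ := fun x t =>
    Complex.exp (Complex.I * ((ℏ * d / 2 * t ^ 2 + dotp b x * t : ℝ) : ℂ)) *
        (Complex.I * ((ℏ * d * t + dotp b x : ℝ) : ℂ)) * ψ (x + t • v)
      + Complex.exp (Complex.I * ((ℏ * d / 2 * t ^ 2 + dotp b x * t : ℝ) : ℂ)) * φ (x + t • v)
    with hg'def
  -- the curve has derivative g'
  have hderiv : ∀ (x : V n) (t : ℝ), HasDerivAt (g x) (g' x t) t := by
    intro x t
    have h2 : HasDerivAt (fun s : ℝ => dotp b x * s) (dotp b x) t := by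
      simpa using (hasDerivAt_id t).const_mul (dotp b x)
    have h1 : HasDerivAt (fun s : ℝ => ℏ * d / 2 * s ^ 2) (ℏ * d * t) t := by
      have h := (hasDerivAt_pow 2 t).const_mul (ℏ * d / 2)
      refine h.congr_deriv ?_
      push_cast; ring
    have hr : HasDerivAt (fun s : ℝ => ℏ * d / 2 * s ^ 2 + dotp b x * s)
        (ℏ * d * t + dotp b x) t := h1.add h2
    have hc : HasDerivAt
        (fun s : ℝ => Complex.I * ((ℏ * d / 2 * s ^ 2 + dotp b x * s : ℝ) : ℂ))
        (Complex.I * ((ℏ * d * t + dotp b x : ℝ) : ℂ)) t :=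
      (hr.ofReal_comp).const_mul Complex.I
    have hline : HasDerivAt (fun s : ℝ => x + s • v) v t := by
      simpa using ((hasDerivAt_id t).smul_const v).const_add x
    have hpsi : HasDerivAt (fun s : ℝ => ψ (x + s • v)) (fderiv ℝ (⇑ψ) (x + t • v) v) t := by
      have := (ψ.differentiableAt (x := x + t • v)).hasFDerivAt.comp_hasDerivAt t hline
      exact this
    have hmul := (hc.cexp).mul hpsi
    rw [hg'def]
    simp only [hφ, LineDeriv.lineDerivOpCLM_apply, SchwartzMap.lineDerivOp_apply_eq_fderiv]
    convert hmul using 1 <;> rfl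
  -- weylOp in terms of g
  have hweyl : ∀ (t : ℝ) (x : V n), weylOp ℏ (t • a) (t • b) (⇑ψ) x = g x t := by
    intro t x
    rw [hgdef]
    show Complex.exp (Complex.I * ℏ * dotp (t • a) (t • b) / 2) *
        Complex.exp (Complex.I * dotp (t • b) x) * ψ (x + ℏ • (t • a)) = _
    have harg : x + ℏ • (t • a) = x + t • v := by rw [hv, smul_comm]
    rw [harg, ← Complex.exp_add]
    congr 2
    rw [dotp_smul_left, dotp_smul_right, dotp_smul_left]
    push_cast; ring
  have hg0 : ∀ x : V n, g x 0 = ψ x := by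
    intro x; simp [hgdef]
  have hg'0 : ∀ x : V n, g' x 0 = Complex.I * fieldOp ℏ a b (⇑ψ) x := by
    intro x
    have hφx : φ (x + (0 : ℝ) • v) = (ℏ : ℂ) * fderiv ℝ (⇑ψ) x a := by
      rw [hφ]
      simp only [LineDeriv.lineDerivOpCLM_apply, SchwartzMap.lineDerivOp_apply_eq_fderiv, zero_smul, add_zero, hv]
      rw [ContinuousLinearMap.map_smul]
      simp [Complex.real_smul]
    rw [hg'def]
    simp only [hφx, fieldOp]
    norm_num
    ring_nf
    rw [Complex.I_sq]
    ring
  have hF : ∀ (t : ℝ) (x : V n), F t x = (g x t - g x 0) / (t : ℂ) - g' x 0 := by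
    intro t x
    rw [hFdef]
    simp only [hweyl t x, hg0 x, hg'0 x]
  -- pointwise convergence
  have hpt : ∀ x : V n, Tendsto (fun t : ℝ => F t x) (nhdsWithin 0 {0}ᶜ) (nhds 0) := by
    intro x
    have h := (hasDerivAt_iff_tendsto_slope.mp (hderiv x 0)).sub_const (g' x 0)
    rw [sub_self] at h
    refine h.congr' ?_
    filter_upwards [self_mem_nhdsWithin] with t ht
    rw [hF t x]
    have : slope (g x) 0 t = (g x t - g x 0) / (t : ℂ) := by
      rw [slope_def_module]
      simp [sub_zero, Complex.real_smul, div_eq_mul_inv, mul_comm]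
    rw [this]
  -- decay bounds
  obtain ⟨C₁, hC₁0, hC₁⟩ := schwartz_decay_bound ψ (n + 2)
  obtain ⟨C₂, hC₂0, hC₂⟩ := schwartz_decay_bound φ (n + 2)
  set C : ℝ := max C₁ C₂ with hC
  have hC0 : 0 ≤ C := le_trans hC₁0 (le_max_left _ _)
  set W : ℝ := (1 + ‖v‖) ^ (n + 2) with hW
  have hW0 : 0 ≤ W := by positivity
  set K : ℝ := (ℏ * |d| + ‖b‖ + 1) * (W * C) with hK
  have hℏd : 0 ≤ ℏ * |d| := mul_nonneg hℏ.le (abs_nonneg _)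
  have hK0 : 0 ≤ K := by
    apply mul_nonneg _ (mul_nonneg hW0 hC0)
    positivity
  set M : V n → ℝ := fun x => K / (1 + ‖x‖) ^ (n + 1) with hM
  have hM0 : ∀ x : V n, 0 ≤ M x := by
    intro x; rw [hM]; positivity
  -- translation bound
  have htrans : ∀ (f : SchwartzMap (V n) ℂ) (Cf : ℝ),
      (∀ y, ‖f y‖ * (1 + ‖y‖) ^ (n + 2) ≤ Cf) →
      ∀ (x u : V n), ‖u‖ ≤ ‖v‖ → ‖f (x + u)‖ * (1 + ‖x‖) ^ (n + 2) ≤ W * Cf := by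
    intro f Cf hCf x u hu
    have hx : ‖x‖ ≤ ‖x + u‖ + ‖u‖ := by
      have := norm_sub_le (x + u) u
      simpa using this
    have h1 : (1 + ‖x‖) ≤ (1 + ‖v‖) * (1 + ‖x + u‖) := by
      nlinarith [norm_nonneg (x + u), norm_nonneg u, norm_nonneg v,
        mul_nonneg (norm_nonneg v) (norm_nonneg (x + u))]
    have h2 : (1 + ‖x‖) ^ (n + 2) ≤ W * (1 + ‖x + u‖) ^ (n + 2) := by
      calc (1 + ‖x‖) ^ (n + 2) ≤ ((1 + ‖v‖) * (1 + ‖x + u‖)) ^ (n + 2) :=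
            pow_le_pow_left₀ (by positivity) h1 _
        _ = W * (1 + ‖x + u‖) ^ (n + 2) := by rw [hW, mul_pow]
    calc ‖f (x + u)‖ * (1 + ‖x‖) ^ (n + 2)
        ≤ ‖f (x + u)‖ * (W * (1 + ‖x + u‖) ^ (n + 2)) :=
          mul_le_mul_of_nonneg_left h2 (norm_nonneg _)
      _ = W * (‖f (x + u)‖ * (1 + ‖x + u‖) ^ (n + 2)) := by ring
      _ ≤ W * Cf := mul_le_mul_of_nonneg_left (hCf _) hW0
  -- key derivative bound
  have key : ∀ (x : V n) (s : ℝ), |s| ≤ 1 → ‖g' x s‖ ≤ M x := by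
    intro x s hs
    have hP : (0 : ℝ) < 1 + ‖x‖ := by positivity
    have hnormexp :
        ‖Complex.exp (Complex.I * ((ℏ * d / 2 * s ^ 2 + dotp b x * s : ℝ) : ℂ))‖ = 1 := by
      have hgen : ∀ r : ℝ, ‖Complex.exp (Complex.I * (r : ℂ))‖ = 1 := by
        intro r
        rw [Complex.norm_exp]
        simp
      exact hgen _
    have hsu : ‖s • v‖ ≤ ‖v‖ := by
      rw [norm_smul, Real.norm_eq_abs]
      calc |s| * ‖v‖ ≤ 1 * ‖v‖ := mul_le_mul_of_nonneg_right hs (norm_nonneg _)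
        _ = ‖v‖ := one_mul _
    have hψb := htrans ψ C₁ hC₁ x (s • v) hsu
    have hφb := htrans φ C₂ hC₂ x (s • v) hsu
    have h1 : ‖g' x s‖ ≤ |ℏ * d * s + dotp b x| * ‖ψ (x + s • v)‖ + ‖φ (x + s • v)‖ := by
      rw [hg'def]
      refine (norm_add_le _ _).trans ?_
      rw [norm_mul, norm_mul, norm_mul, norm_mul, hnormexp]
      simp only [Complex.norm_I, Complex.norm_real, Real.norm_eq_abs, one_mul, mul_one]
      exact le_rfl
    have habs : |ℏ * d * s + dotp b x| ≤ ℏ * |d| + ‖b‖ * ‖x‖ := by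
      refine (abs_add_le _ _).trans (add_le_add ?_ (abs_dotp_le b x))
      rw [abs_mul, abs_mul, abs_of_pos hℏ]
      calc ℏ * |d| * |s| ≤ ℏ * |d| * 1 := mul_le_mul_of_nonneg_left hs hℏd
        _ = ℏ * |d| := mul_one _
    have habs0 : (0 : ℝ) ≤ |ℏ * d * s + dotp b x| := abs_nonneg _
    have hfinal : ‖g' x s‖ * (1 + ‖x‖) ^ (n + 2) ≤ K * (1 + ‖x‖) := by
      have step1 : ‖g' x s‖ * (1 + ‖x‖) ^ (n + 2) ≤
          |ℏ * d * s + dotp b x| * (‖ψ (x + s • v)‖ * (1 + ‖x‖) ^ (n + 2))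
            + ‖φ (x + s • v)‖ * (1 + ‖x‖) ^ (n + 2) := by
        have := mul_le_mul_of_nonneg_right h1 (le_of_lt (by positivity :
          (0:ℝ) < (1 + ‖x‖) ^ (n + 2)))
        calc ‖g' x s‖ * (1 + ‖x‖) ^ (n + 2)
            ≤ (|ℏ * d * s + dotp b x| * ‖ψ (x + s • v)‖ + ‖φ (x + s • v)‖)
              * (1 + ‖x‖) ^ (n + 2) := this
          _ = _ := by ring
      have step2 : |ℏ * d * s + dotp b x| * (‖ψ (x + s • v)‖ * (1 + ‖x‖) ^ (n + 2))
            + ‖φ (x + s • v)‖ * (1 + ‖x‖) ^ (n + 2)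
          ≤ (ℏ * |d| + ‖b‖ * ‖x‖) * (W * C₁) + W * C₂ := by
        refine add_le_add (mul_le_mul habs hψb (by positivity) (by positivity)) hφb
      have step3 : (ℏ * |d| + ‖b‖ * ‖x‖) * (W * C₁) + W * C₂ ≤ K * (1 + ‖x‖) := by
        have hC₁C : C₁ ≤ C := le_max_left _ _
        have hC₂C : C₂ ≤ C := le_max_right _ _
        have hWC1 : W * C₁ ≤ W * C := mul_le_mul_of_nonneg_left hC₁C hW0
        have hWC2 : W * C₂ ≤ W * C := mul_le_mul_of_nonneg_left hC₂C hW0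
        have hbx : (0:ℝ) ≤ ‖b‖ * ‖x‖ := mul_nonneg (norm_nonneg _) (norm_nonneg _)
        have e1 : (ℏ * |d| + ‖b‖ * ‖x‖) * (W * C₁) + W * C₂
            ≤ (ℏ * |d| + ‖b‖ * ‖x‖ + 1) * (W * C) := by
          have := mul_le_mul_of_nonneg_left hWC1 (by linarith : (0:ℝ) ≤ ℏ * |d| + ‖b‖ * ‖x‖)
          nlinarith
        refine e1.trans ?_
        rw [hK]
        have e2 : ℏ * |d| + ‖b‖ * ‖x‖ + 1 ≤ (ℏ * |d| + ‖b‖ + 1) * (1 + ‖x‖) := by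
          nlinarith [norm_nonneg x, norm_nonneg b, mul_nonneg hℏd (norm_nonneg x)]
        have hWC0 : (0:ℝ) ≤ W * C := mul_nonneg hW0 hC0
        nlinarith
      exact step1.trans (step2.trans step3)
    rw [hM, le_div_iff₀ (by positivity)]
    have h' : ‖g' x s‖ * ((1 + ‖x‖) ^ (n + 1) * (1 + ‖x‖)) ≤ K * (1 + ‖x‖) := by
      rw [← pow_succ]; exact hfinal
    rw [← mul_assoc] at h'
    exact le_of_mul_le_mul_right h' hP
  -- quotient bound via MVT
  have hquot : ∀ t : ℝ, t ≠ 0 → |t| ≤ 1 → ∀ x : V n, ‖F t x‖ ≤ 2 * M x := by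
    intro t ht ht1 x
    have habs := abs_le.mp ht1
    have hg'0b : ‖g' x 0‖ ≤ M x := key x 0 (by simp)
    have hseg : ‖g x t - g x 0‖ ≤ M x * |t| := by
      rcases ht.lt_or_gt with hneg | hpos
      · have h := norm_image_sub_le_of_norm_deriv_le_segment'
          (f := g x) (f' := g' x) (a := t) (b := 0) (C := M x)
          (fun s _ => (hderiv x s).hasDerivWithinAt)
          (fun s hs => key x s (abs_le.mpr ⟨le_trans habs.1 hs.1, le_trans hs.2.le
            (by linarith)⟩))
          0 (Set.right_mem_Icc.mpr hneg.le)
        rw [norm_sub_rev] at h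
        rw [abs_of_neg hneg]
        linarith
      · have h := norm_image_sub_le_of_norm_deriv_le_segment'
          (f := g x) (f' := g' x) (a := 0) (b := t) (C := M x)
          (fun s _ => (hderiv x s).hasDerivWithinAt)
          (fun s hs => key x s (abs_le.mpr ⟨by linarith [hs.1], le_trans hs.2.le habs.2⟩))
          t (Set.right_mem_Icc.mpr hpos.le)
        rw [abs_of_pos hpos]
        linarith
    have hdiv : ‖(g x t - g x 0) / (t : ℂ)‖ ≤ M x := by
      rw [norm_div]
      have hnt : ‖(t : ℂ)‖ = |t| := by
        rw [Complex.norm_real, Real.norm_eq_abs]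
      rw [hnt, div_le_iff₀ (abs_pos.mpr ht)]
      exact hseg
    calc ‖F t x‖ = ‖(g x t - g x 0) / (t : ℂ) - g' x 0‖ := by rw [hF t x]
      _ ≤ ‖(g x t - g x 0) / (t : ℂ)‖ + ‖g' x 0‖ := norm_sub_le _ _
      _ ≤ M x + M x := add_le_add hdiv hg'0b
      _ = 2 * M x := by ring
  -- continuity of F t
  have hgc : ∀ t : ℝ, Continuous fun x : V n => g x t := by
    intro t
    rw [hgdef]
    refine Continuous.mul ?_ (ψ.continuous.comp (continuous_id.add continuous_const))
    refine Continuous.cexp ?_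
    exact continuous_const.mul (Complex.continuous_ofReal.comp
      (continuous_const.add ((dotp_cont b).mul continuous_const)))
  have hg'c : ∀ t : ℝ, Continuous fun x : V n => g' x t := by
    intro t
    rw [hg'def]
    have hexp : Continuous fun x : V n =>
        Complex.exp (Complex.I * ((ℏ * d / 2 * t ^ 2 + dotp b x * t : ℝ) : ℂ)) := by
      refine Continuous.cexp ?_
      exact continuous_const.mul (Complex.continuous_ofReal.comp
        (continuous_const.add ((dotp_cont b).mul continuous_const)))
    refine Continuous.add ?_ ?_
    · refine Continuous.mul (Continuous.mul hexp ?_)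
        (ψ.continuous.comp (continuous_id.add continuous_const))
      exact continuous_const.mul (Complex.continuous_ofReal.comp
        (continuous_const.add (dotp_cont b)))
    · exact hexp.mul (φ.continuous.comp (continuous_id.add continuous_const))
  have hFc : ∀ t : ℝ, Continuous (F t) := by
    intro t
    have heq : F t = fun x => (g x t - g x 0) / (t : ℂ) - g' x 0 := funext (hF t)
    rw [heq]
    exact (((hgc t).sub (hgc 0)).div_const _).sub (hg'c 0)
  -- integrability of the square of the dominating function
  have hVn : (Module.finrank ℝ (V n) : ℝ) < (n : ℝ) + 1 := by
    rw [finrank_euclideanSpace_fin]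
    linarith
  have hint : Integrable
      (fun x : V n => (2 * K) ^ 2 * (1 + ‖x‖) ^ (-((n : ℝ) + 1))) volume :=
    (integrable_one_add_norm hVn).const_mul _
  have hMsq : Integrable (fun x : V n => (2 * M x) ^ 2) volume := by
    refine hint.mono' ?_ ?_
    · refine Continuous.aestronglyMeasurable ?_
      have hMc : Continuous M := by
        rw [hM]
        refine continuous_const.div ?_ fun x => ?_
        · exact (continuous_const.add continuous_norm).pow _
        · positivity
      exact ((continuous_const.mul hMc).pow 2)
    · refine ae_of_all _ fun x => ?_
      have hP : (0 : ℝ) < 1 + ‖x‖ := by positivity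
      have hP1 : (1 : ℝ) ≤ 1 + ‖x‖ := by linarith [norm_nonneg x]
      have hPm1 : (1 : ℝ) ≤ (1 + ‖x‖) ^ (n + 1) := one_le_pow₀ hP1
      rw [Real.norm_eq_abs, _root_.abs_of_nonneg (by positivity)]
      rw [Real.rpow_neg hP.le,
        show ((n : ℝ) + 1) = ((n + 1 : ℕ) : ℝ) by push_cast; ring,
        Real.rpow_natCast]
      have heq : (2 * M x) ^ 2 = (2 * K) ^ 2 * (((1 + ‖x‖) ^ (n + 1)) ^ 2)⁻¹ := by
        rw [hM]
        field_simp
      rw [heq]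
      refine mul_le_mul_of_nonneg_left ?_ (by positivity)
      refine inv_anti₀ (by positivity) ?_
      calc (1 + ‖x‖) ^ (n + 1) = (1 + ‖x‖) ^ (n + 1) * 1 := (mul_one _).symm
        _ ≤ (1 + ‖x‖) ^ (n + 1) * (1 + ‖x‖) ^ (n + 1) :=
            mul_le_mul_of_nonneg_left hPm1 (by positivity)
        _ = ((1 + ‖x‖) ^ (n + 1)) ^ 2 := (sq _).symm
  -- finiteness of the lintegral bound
  have hbound_fin :
      ∫⁻ x : V n, ENNReal.ofReal (2 * M x) ^ (2 : ℝ) ∂volume ≠ ⊤ := by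
    have heq : ∀ x : V n,
        ENNReal.ofReal (2 * M x) ^ (2 : ℝ) = ENNReal.ofReal ((2 * M x) ^ 2) := by
      intro x
      rw [ENNReal.ofReal_rpow_of_nonneg (by positivity) (by norm_num)]
      norm_num
    calc ∫⁻ x : V n, ENNReal.ofReal (2 * M x) ^ (2 : ℝ) ∂volume
        = ∫⁻ x : V n, ENNReal.ofReal ((2 * M x) ^ 2) ∂volume := lintegral_congr heq
      _ ≠ ⊤ := hMsq.lintegral_lt_top.ne
  -- measurability
  have hFn_meas : ∀ᶠ t in nhdsWithin (0:ℝ) {0}ᶜ,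
      Measurable fun x : V n => ((‖F t x‖₊ : ℝ≥0∞)) ^ (2 : ℝ) := by
    refine Eventually.of_forall fun t => ?_
    exact (ENNReal.continuous_rpow_const.comp
      (ENNReal.continuous_coe.comp (continuous_nnnorm.comp (hFc t)))).measurable
  -- eventual bound
  have hev : ∀ᶠ t in nhdsWithin (0:ℝ) {0}ᶜ, t ≠ 0 ∧ |t| ≤ 1 := by
    have h1 : ∀ᶠ t : ℝ in nhds 0, |t| ≤ 1 := by
      filter_upwards [Metric.closedBall_mem_nhds (0 : ℝ) one_pos] with t ht
      simpa [Real.dist_eq] using ht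
    have h2 : ∀ᶠ t in nhdsWithin (0:ℝ) {0}ᶜ, t ≠ 0 := by
      filter_upwards [self_mem_nhdsWithin] with t ht
      exact ht
    exact h2.and (h1.filter_mono nhdsWithin_le_nhds)
  have h_bound : ∀ᶠ t in nhdsWithin (0:ℝ) {0}ᶜ,
      ∀ᵐ x : V n ∂volume, ((‖F t x‖₊ : ℝ≥0∞)) ^ (2 : ℝ)
        ≤ ENNReal.ofReal (2 * M x) ^ (2 : ℝ) := by
    filter_upwards [hev] with t ht
    refine ae_of_all _ fun x => ?_
    rw [show ((‖F t x‖₊ : ℝ≥0∞)) = ENNReal.ofReal ‖F t x‖ from (ofReal_norm _).symm]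
    exact ENNReal.rpow_le_rpow (ENNReal.ofReal_le_ofReal (hquot t ht.1 ht.2 x)) (by norm_num)
  -- a.e. pointwise convergence of the squared norms
  have h_lim : ∀ᵐ x : V n ∂volume,
      Tendsto (fun t => ((‖F t x‖₊ : ℝ≥0∞)) ^ (2 : ℝ)) (nhdsWithin (0:ℝ) {0}ᶜ)
        (nhds ((fun _ : V n => (0:ℝ≥0∞)) x)) := by
    refine ae_of_all _ fun x => ?_
    have h1 : Tendsto (fun t => ‖F t x‖) (nhdsWithin (0:ℝ) {0}ᶜ) (nhds 0) := by
      have := (hpt x).norm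
      simpa using this
    have h2 : Tendsto (fun t => ENNReal.ofReal ‖F t x‖) (nhdsWithin (0:ℝ) {0}ᶜ)
        (nhds 0) := by
      have := ENNReal.tendsto_ofReal h1
      simpa using this
    have h3 := h2.ennrpow_const 2
    rw [ENNReal.zero_rpow_of_pos (by norm_num)] at h3
    have h4 : ∀ s : ℝ, (‖F s x‖₊ : ℝ≥0∞) = ENNReal.ofReal ‖F s x‖ := fun s =>
      (ofReal_norm _).symm
    simp only [h4]
    exact h3
  -- dominated convergence
  have hlim : Tendsto (fun t => ∫⁻ x : V n, ((‖F t x‖₊ : ℝ≥0∞)) ^ (2 : ℝ) ∂volume)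
      (nhdsWithin (0:ℝ) {0}ᶜ) (nhds 0) := by
    have h := tendsto_lintegral_filter_of_dominated_convergence
      (μ := (volume : Measure (V n)))
      (F := fun t x => ((‖F t x‖₊ : ℝ≥0∞)) ^ (2 : ℝ))
      (f := fun _ : V n => (0:ℝ≥0∞))
      (fun x => ENNReal.ofReal (2 * M x) ^ (2 : ℝ))
      hFn_meas h_bound hbound_fin h_lim
    simpa using h
  -- conclusion
  have hfinal := hlim.ennrpow_const (1 / 2)
  rw [ENNReal.zero_rpow_of_pos (by norm_num)] at hfinal
  refine hfinal.congr fun t => ?_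
  rw [eLpNorm_eq_lintegral_rpow_enorm_toReal (by norm_num) (by norm_num)]
  norm_num
  rfl
end
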